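/- arXiv:2505.03101 — 2 statements merged into one kernel-verified Lean document; each statement's English description precedes it below -/
import Mathlib

section
/- Let (β₁, ..., β_{2^L}) be a Cantor basis of GF(2^{2^L}) over GF(2), and set W_i = span_{GF(2)}(β₁, ..., β_i). Then for each i with 1 ≤ i < 2^L, the map x ↦ x² - x sends W_{i+1} onto W_i. -/
/-! Over `GF(2)` the map `x ↦ x² - x` is Frobenius minus the identity, hence linear. It kills
`β₁` and sends `β_{j+1}` to `β_j`, so it maps the span of `β₁, …, β_{i+1}` onto that of
`β₁, …, β_i`. -/

open Submodule FiniteField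

theorem Submodule.map_span_image_lt_succ_of_shift {R M : Type*} [Semiring R] [AddCommMonoid M]
    [Module R M] {n : ℕ} (f : M →ₗ[R] M) (v : Fin n → M) (hn : 0 < n)
    (hf_zero : f (v ⟨0, hn⟩) = 0)
    (hf_succ : ∀ k (hk : k + 1 < n), f (v ⟨k + 1, hk⟩) = v ⟨k, by omega⟩)
    {i : ℕ} (hi : i < n) :
    (span R (v '' {j | (j : ℕ) < i + 1})).map f = span R (v '' {j | (j : ℕ) < i}) := by
  rw [map_span, ← Set.image_comp]
  apply le_antisymm
  · rw [span_le]
    rintro _ ⟨⟨j, hj⟩, hji, rfl⟩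
    cases j with
    | zero => simp [hf_zero]
    | succ k =>
      rw [Function.comp_apply, hf_succ k hj]
      exact subset_span ⟨_, by simpa using hji, rfl⟩
  · apply span_mono
    rintro _ ⟨⟨j, hj⟩, hji : j < i, rfl⟩
    exact ⟨⟨j + 1, by omega⟩, by simpa using hji, hf_succ j _⟩

def FiniteField.artinSchreier (K R : Type*) [Field K] [Fintype K] [CommRing R] [Algebra K R] :
    R →ₗ[K] R :=
  (frobeniusAlgHom K R).toLinearMap - LinearMap.id

theorem FiniteField.artinSchreier_apply {K R : Type*} [Field K] [Fintype K] [CommRing R]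
    [Algebra K R] (x : R) : artinSchreier K R x = x ^ Fintype.card K - x :=
  rfl

/-- Let `(β₁, …, β_{2^L})` be a Cantor basis of `GF(2^(2^L))` over `GF(2)` and
`Wᵢ` the span of the first `i` basis elements.  For `1 ≤ i < 2^L`, the map
`x ↦ x² - x` sends `W_{i+1}` onto `Wᵢ`. -/
theorem cantor_map_onto (L : ℕ)
    (b : Module.Basis (Fin (2 ^ L)) (ZMod 2) (GaloisField 2 (2 ^ L)))
    (hb1 : b ⟨0, by positivity⟩ = 1)
    (hb : ∀ i : ℕ, ∀ h : i + 1 < 2 ^ L,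
      (b ⟨i + 1, h⟩) ^ 2 - b ⟨i + 1, h⟩ = b ⟨i, by omega⟩)
    (W : ℕ → Submodule (ZMod 2) (GaloisField 2 (2 ^ L)))
    (hW : ∀ i, W i = Submodule.span (ZMod 2) (b '' {j : Fin (2 ^ L) | (j : ℕ) < i}))
    (i : ℕ) (hi2 : i < 2 ^ L) :
    (fun x => x ^ 2 - x) '' ((W (i + 1) : Set (GaloisField 2 (2 ^ L)))) =
      (W i : Set (GaloisField 2 (2 ^ L))) := by
  have hf : ⇑(artinSchreier (ZMod 2) (GaloisField 2 (2 ^ L))) = fun x => x ^ 2 - x := by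
    funext x
    rw [artinSchreier_apply, ZMod.card]
  rw [← hf, ← map_coe, hW, hW, map_span_image_lt_succ_of_shift _ b (by positivity)
    (by rw [hf, hb1]; ring) (fun k hk => by rw [hf]; exact hb k hk) hi2]
end

section
/- Let K be a field of characteristic 2, k ≥ 1, and let c₀, ..., c_{N-1} ∈ K be distinct elements. Given polynomials r₀, ..., r_{N-1} ∈ K[x], each of degree < 2^k, there exists a polynomial f ∈ K[x] of degree < N·2^k whose remainder modulo x^{2^k} - x - c_j is r_j for each j, constructed as follows: writing r_j(x) = Σ_i r_{ij} x^i, choose for each i a polynomial t_i of degree < N with t_i(c_j) = r_{ij} for all j, and set f(x) = Σ_{i=0}^{2^k-1} t_i(x^{2^k} - x)·x^i. Then f mod (x^{2^k} - x - c_j) = r_j for all j. -/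
open Polynomial

/-!
Writing `g = X ^ (2 ^ k) - X`, each summand `tᵢ(g) Xⁱ` of `f` is congruent to `tᵢ(cⱼ) Xⁱ`
modulo `g - cⱼ`, because `g - cⱼ ∣ tᵢ(g) - tᵢ(cⱼ)`. So `f` is congruent to
`∑ᵢ tᵢ(cⱼ) Xⁱ = rⱼ`, which has degree below `2 ^ k = deg (g - cⱼ)` and is therefore the
remainder.
-/

namespace Polynomial

theorem sum_fin_C_coeff_mul_X_pow {R : Type*} [Semiring R] {n : ℕ} {p : R[X]}
    (hp : p.degree < n) : ∑ i : Fin n, C (p.coeff i) * X ^ (i : ℕ) = p := by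
  rw [sum_fin (fun i a => C a * X ^ i) (fun _ => by simp) hp, sum_C_mul_X_pow_eq]

theorem sub_C_dvd_comp_sub_C_eval {R : Type*} [CommRing R] (g : R[X]) (a : R) (p : R[X]) :
    g - C a ∣ p.comp g - C (p.eval a) := by
  simpa [eval_map, comp, ← coe_evalRingHom, hom_eval₂] using sub_dvd_eval_sub g (C a) (p.map C)

theorem degree_X_pow_sub_X_sub_C {R : Type*} [Ring R] [Nontrivial R] {n : ℕ} (hn : 1 < n)
    (a : R) : (X ^ n - X - C a).degree = (n : WithBot ℕ) := by
  rw [sub_sub, degree_sub_eq_left_of_degree_lt, degree_X_pow]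
  rw [degree_X_add_C, degree_X_pow]
  exact_mod_cast hn

theorem monic_X_pow_sub_X_sub_C {R : Type*} [Ring R] [Nontrivial R] {n : ℕ} (hn : 1 < n)
    (a : R) : (X ^ n - X - C a).Monic := by
  rw [sub_sub]
  exact monic_X_pow_sub (by rw [degree_X_add_C]; exact_mod_cast hn)

theorem degree_comp_mul_X_pow_lt {R : Type*} [Semiring R] {p g : R[X]} {N n i : ℕ}
    (hp : p.degree < N) (hg : g.natDegree ≤ n) (hi : i < n) :
    (p.comp g * X ^ i).degree < ↑(N * n) := by
  rcases eq_or_ne p 0 with rfl | hp0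
  · rw [zero_comp, zero_mul, degree_zero]
    exact WithBot.bot_lt_coe _
  have hpN : p.natDegree < N := (natDegree_lt_iff_degree_lt hp0).2 hp
  have hle : (p.comp g * X ^ i).natDegree ≤ p.natDegree * n + i :=
    natDegree_mul_le.trans
      (add_le_add (natDegree_comp_le.trans (Nat.mul_le_mul_left _ hg)) (natDegree_X_pow_le _))
  calc (p.comp g * X ^ i).degree ≤ ((p.comp g * X ^ i).natDegree : WithBot ℕ) :=
        degree_le_natDegree
    _ < ↑(N * n) := by exact_mod_cast hle.trans_lt (by nlinarith)

theorem degree_sum_comp_mul_X_pow_lt {R : Type*} [Semiring R] {g : R[X]} {N n : ℕ}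
    (hg : g.natDegree ≤ n) (t : Fin n → R[X]) (ht : ∀ i, (t i).degree < N) :
    (∑ i : Fin n, (t i).comp g * X ^ (i : ℕ)).degree < ↑(N * n) :=
  (degree_sum_le _ _).trans_lt <| (Finset.sup_lt_iff (WithBot.bot_lt_coe _)).2 fun i _ =>
    degree_comp_mul_X_pow_lt (ht i) hg i.isLt

theorem sum_comp_mul_X_pow_modByMonic {R : Type*} [CommRing R] [Nontrivial R] {g : R[X]} {a : R}
    {n : ℕ} (hmon : (g - C a).Monic) (hdeg : (g - C a).degree = n) (t : Fin n → R[X]) :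
    (∑ i : Fin n, (t i).comp g * X ^ (i : ℕ)) %ₘ (g - C a) =
      ∑ i : Fin n, C ((t i).eval a) * X ^ (i : ℕ) := by
  have hdvd : g - C a ∣ ∑ i : Fin n, (t i).comp g * X ^ (i : ℕ) -
      ∑ i : Fin n, C ((t i).eval a) * X ^ (i : ℕ) := by
    rw [← Finset.sum_sub_distrib]
    exact Finset.dvd_sum fun i _ => by
      rw [← sub_mul]
      exact (sub_C_dvd_comp_sub_C_eval g a (t i)).mul_right _
  rw [modByMonic_eq_of_dvd_sub hmon hdvd, (modByMonic_eq_self_iff hmon).2]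
  rw [hdeg]
  exact degree_sum_fin_lt _

end Polynomial

theorem dividend_reconstruction_general (K : Type*) [Field K]
    (k N : ℕ) (hk : 0 < k)
    (c : Fin N → K)
    (r : Fin N → K[X]) (hr : ∀ j, (r j).degree < ((2 ^ k : ℕ) : WithBot ℕ))
    (t : Fin (2 ^ k) → K[X]) (ht : ∀ i, (t i).degree < (N : WithBot ℕ))
    (htc : ∀ i j, (t i).eval (c j) = (r j).coeff i)
    (f : K[X])
    (hf : f = ∑ i : Fin (2 ^ k), (t i).comp (X ^ (2 ^ k) - X) * X ^ (i : ℕ)) :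
    f.degree < ((N * 2 ^ k : ℕ) : WithBot ℕ) ∧
      ∀ j, f %ₘ (X ^ (2 ^ k) - X - C (c j)) = r j := by
  have hk2 : 1 < 2 ^ k := Nat.one_lt_two_pow hk.ne'
  have hg : (X ^ (2 ^ k) - X : K[X]).natDegree ≤ 2 ^ k :=
    (natDegree_sub_le _ _).trans (max_le (natDegree_X_pow_le _) (natDegree_X_le.trans hk2.le))
  subst hf
  refine ⟨degree_sum_comp_mul_X_pow_lt hg t ht, fun j => ?_⟩
  rw [sum_comp_mul_X_pow_modByMonic (monic_X_pow_sub_X_sub_C hk2 _)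
    (degree_X_pow_sub_X_sub_C hk2 _)]
  simp_rw [htc]
  exact sum_fin_C_coeff_mul_X_pow (hr j)

/-- Dividend reconstruction: over a field `K` of characteristic 2, given
distinct `c₀, …, c_{N-1}` and polynomials `r₀, …, r_{N-1}` of degree `< 2^k`,
if `tᵢ` are polynomials of degree `< N` with `tᵢ(cⱼ) = coeff i (rⱼ)`, then
`f(x) = ∑_{i<2^k} tᵢ(x^(2^k) - x)·xⁱ` has degree `< N·2^k` and its remainder
modulo `x^(2^k) - x - cⱼ` is `rⱼ` for every `j`. -/
theorem dividend_reconstruction (K : Type*) [Field K] [CharP K 2]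
    (k N : ℕ) (hk : 0 < k)
    (c : Fin N → K) (hc : Function.Injective c)
    (r : Fin N → K[X]) (hr : ∀ j, (r j).degree < ((2 ^ k : ℕ) : WithBot ℕ))
    (t : Fin (2 ^ k) → K[X]) (ht : ∀ i, (t i).degree < (N : WithBot ℕ))
    (htc : ∀ i j, (t i).eval (c j) = (r j).coeff i)
    (f : K[X])
    (hf : f = ∑ i : Fin (2 ^ k), (t i).comp (X ^ (2 ^ k) - X) * X ^ (i : ℕ)) :
    f.degree < ((N * 2 ^ k : ℕ) : WithBot ℕ) ∧
      ∀ j, f %ₘ (X ^ (2 ^ k) - X - C (c j)) = r j :=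
  dividend_reconstruction_general K k N hk c r hr t ht htc f hf
end
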